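/- Consider n cells of q levels and a data alphabet of size L with n < L - 1 and L ≤ 2^(n/16). Any rewriting code over the complete data graph on L values guarantees at most O(n·q·log(n/log L) / log L) rewrites. -/

import Mathlib

/-- `Supports n q L dec upd t`: the rewriting code with decoding map `dec` and update
strategy `upd`, on `n` cells of `q` levels and data alphabet `Fin L` (complete data
graph), guarantees `t` rewrites starting from the all-zero state. -/
def Supports (n q L : ℕ) (dec : (Fin n → ℕ) → Fin L)
    (upd : (Fin n → ℕ) → Fin L → (Fin n → ℕ)) (t : ℕ) : Prop :=
  ∀ v : ℕ → Fin L, v 0 ≠ dec (fun _ => 0) → (∀ i, v (i + 1) ≠ v i) →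
  ∀ s : ℕ → Fin n → ℕ, s 0 = (fun _ => 0) → (∀ i, s (i + 1) = upd (s i) (v i)) →
  ∀ i < t, (∀ j, s i j ≤ s (i + 1) j) ∧ (∀ j, s (i + 1) j ≤ q - 1) ∧ dec (s (i + 1)) = v i

/-!
From any state, at most `(n + r).choose r` states lie within `r` unit increments, so when this is
less than `L` an adversary can always request a value decoded at none of them. Every rewrite then
raises the total level by more than `r`, while the total level never exceeds `n (q - 1)`.
Choosing `r ≈ log L / (32 log (n / log L))` keeps `(n + r).choose r ≤ (2e n / r) ^ r` below `L`.
-/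

open Finset Real

section Reachability

variable {n : ℕ} {α : Type*} [DecidableEq α]

/-- A multiset of `r` cells lists the increments; `none` stands for an unused one. -/
def reachableValues (dec : (Fin n → ℕ) → α) (x : Fin n → ℕ) (r : ℕ) : Finset α :=
  univ.image fun s : Sym (Option (Fin n)) r => dec (x + fun j => Multiset.count (some j) s)

lemma card_reachableValues_le (dec : (Fin n → ℕ) → α) (x : Fin n → ℕ) (r : ℕ) :
    #(reachableValues dec x r) ≤ (n + r).choose r :=
  card_image_le.trans_eq <| by
    rw [card_univ, Sym.card_sym_eq_choose, Fintype.card_option, Fintype.card_fin,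
      Nat.add_right_comm, Nat.add_sub_cancel]

lemma mem_reachableValues (dec : (Fin n → ℕ) → α) {x y : Fin n → ℕ} {r : ℕ} (hxy : x ≤ y)
    (hy : ∑ j, y j ≤ ∑ j, x j + r) : dec y ∈ reachableValues dec x r := by
  set d : Fin n → ℕ := y - x
  have hdy : x + d = y := add_tsub_cancel_of_le hxy
  have hd : ∑ j, d j ≤ r := by
    rw [← hdy] at hy
    simpa [Finset.sum_add_distrib] using hy
  let e : Option (Fin n) → ℕ := fun o => o.elim (r - ∑ j, d j) d
  have he : ∑ o, e o = r := by
    rw [Fintype.sum_option]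
    exact Nat.sub_add_cancel hd
  refine mem_image.2 ⟨(Sym.equivNatSumOfFintype _ r).symm ⟨e, he⟩, mem_univ _, ?_⟩
  rw [← hdy]
  congr 2
  ext j
  rw [← Sym.coe_equivNatSumOfFintype_apply_apply, Equiv.apply_symm_apply]
  rfl

end Reachability

def adversaryRun {σ α : Type*} (upd : σ → α → σ) (adv : σ → α → α) (x₀ : σ) (w₀ : α) :
    ℕ → σ × α
  | 0 => (x₀, w₀)
  | k + 1 =>
    let p := adversaryRun upd adv x₀ w₀ k
    (upd p.1 p.2, adv (upd p.1 p.2) p.2)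

theorem Supports.mul_succ_le {n q L r t : ℕ} {dec : (Fin n → ℕ) → Fin L}
    {upd : (Fin n → ℕ) → Fin L → (Fin n → ℕ)} (hS : Supports n q L dec upd t)
    (hcard : (n + r).choose r < L) : t * (r + 1) ≤ n * (q - 1) := by
  have hunreach (x : Fin n → ℕ) : ∃ w, w ∉ reachableValues dec x r := by
    obtain ⟨w, -, hw⟩ := exists_mem_notMem_of_card_lt_card (t := univ)
      ((card_reachableValues_le dec x r).trans_lt (by simpa using hcard))
    exact ⟨w, hw⟩
  choose bad hbad using hunreach
  have hbad_ne (x : Fin n → ℕ) : bad x ≠ dec x := fun h =>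
    hbad x (h ▸ mem_reachableValues dec le_rfl (Nat.le_add_right _ _))
  have : Nontrivial (Fin L) :=
    Fin.nontrivial_iff_two_le.2 (by have := Nat.choose_pos (Nat.le_add_left r n); omega)
  -- the fallback is only reached once the code has failed, but keeps the requests valid forever
  let adv (x : Fin n → ℕ) (w : Fin L) : Fin L := if bad x = w then (exists_ne w).choose else bad x
  have hadv (x : Fin n → ℕ) (w : Fin L) : adv x w ≠ w := by
    unfold adv; split_ifs with h
    · exact (exists_ne w).choose_spec
    · exact h
  set p := adversaryRun upd adv (fun _ => 0) (bad fun _ => 0)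
  have H := hS (fun k => (p k).2) (hbad_ne _) (fun k => hadv _ _) (fun k => (p k).1) rfl
    (fun k => rfl)
  have hv (i : ℕ) (hi : i ≤ t) : (p i).2 = bad (p i).1 := by
    cases i with
    | zero => rfl
    | succ i =>
      have hdec : dec (p (i + 1)).1 = (p i).2 := (H i hi).2.2
      show adv (p (i + 1)).1 (p i).2 = _
      exact if_neg (hdec ▸ hbad_ne _)
  have hjump (i : ℕ) (hi : i < t) : ∑ j, (p i).1 j + r < ∑ j, (p (i + 1)).1 j := by
    by_contra! h
    have hmem := mem_reachableValues dec (H i hi).1 h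
    rw [(H i hi).2.2, hv i hi.le] at hmem
    exact hbad _ hmem
  have hsum (i : ℕ) (hi : i ≤ t) : i * (r + 1) ≤ ∑ j, (p i).1 j := by
    induction i with
    | zero => simp
    | succ i ih => have := hjump i hi; have := ih (by omega); rw [Nat.succ_mul]; omega
  refine (hsum t le_rfl).trans ?_
  cases t with
  | zero => simp [p, adversaryRun]
  | succ k =>
    calc ∑ j, (p (k + 1)).1 j ≤ ∑ _j : Fin n, (q - 1) :=
          sum_le_sum fun j _ => (H k k.lt_succ_self).2.1 j
    _ = n * (q - 1) := by rw [sum_const, card_univ, Fintype.card_fin, smul_eq_mul]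

lemma choose_add_le_exp_mul_pow (n r : ℕ) (hr : 0 < r) :
    ((n + r).choose r : ℝ) ≤ (exp 1 * (n + r) / r) ^ r := by
  have hr' : (0 : ℝ) < r := Nat.cast_pos.2 hr
  calc ((n + r).choose r : ℝ) ≤ ((n + r : ℕ) : ℝ) ^ r / r.factorial := Nat.choose_le_pow_div r _
  _ = ((n + r) / r) ^ r * ((r : ℝ) ^ r / r.factorial) := by
      push_cast; rw [div_pow]; field_simp
  _ ≤ ((n + r) / r) ^ r * exp r := by gcongr; exact pow_div_factorial_le_exp _ hr'.le r
  _ = (exp 1 * (n + r) / r) ^ r := by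
      rw [← exp_one_pow, mul_div_assoc, mul_pow, mul_comm]

lemma logb_two_le_two_mul {x : ℝ} (hx : 0 < x) : logb 2 x ≤ 2 * x := by
  have h2 : 1 / 2 < log 2 := by linarith [log_two_gt_d9]
  rw [logb, div_le_iff₀ (by linarith)]
  nlinarith [log_le_sub_one_of_pos hx]

lemma choose_add_lt_two_rpow {n r : ℕ} {b : ℝ} (hr : 0 < r) (hb : 0 < b) (hbn : 16 * b ≤ n)
    (hr_le : r * (32 * logb 2 (n / b)) ≤ b) (hr_ge : b ≤ 64 * r * logb 2 (n / b)) :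
    ((n + r).choose r : ℝ) < 2 ^ b := by
  set ν := (n : ℝ) / b
  set m := logb 2 ν
  have hr' : (1 : ℝ) ≤ r := Nat.one_le_cast.2 hr
  have hν : 16 ≤ ν := (le_div_iff₀ hb).2 (by linarith)
  have hm : 4 ≤ m := (le_logb_iff_rpow_le one_lt_two (by linarith)).2 (by norm_num; exact hν)
  have hmν : m ≤ 2 * ν := logb_two_le_two_mul (by linarith)
  have hrn : (r : ℝ) ≤ n := by nlinarith
  have hbr : b / r ≤ 64 * m := (div_le_iff₀ (by linarith)).2 (by linarith)
  have hbase : exp 1 * (2 * n) / r < 2 ^ (10 + 2 * m) := by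
    calc exp 1 * (2 * n) / r = 2 * exp 1 * ν * (b / r) := by simp only [ν]; field_simp
    _ ≤ 2 * exp 1 * ν * (64 * (2 * ν)) := by gcongr; linarith
    _ < 1024 * ν ^ 2 := by nlinarith [exp_one_lt_d9]
    _ = 2 ^ (10 + 2 * m) := by
        rw [rpow_add two_pos, mul_comm (2 : ℝ) m, rpow_mul two_pos.le,
          rpow_logb two_pos (by norm_num) (by linarith), rpow_two]
        norm_num
  calc ((n + r).choose r : ℝ) ≤ (exp 1 * (n + r) / r) ^ r := choose_add_le_exp_mul_pow n r hr
  _ ≤ (exp 1 * (2 * n) / r) ^ r := by gcongr; linarith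
  _ < (2 ^ (10 + 2 * m)) ^ r := by gcongr
  _ = 2 ^ ((10 + 2 * m) * r) := (rpow_mul_natCast two_pos.le _ _).symm
  _ ≤ 2 ^ b := rpow_le_rpow_of_exponent_le one_le_two (by nlinarith)

/-- Theorem (upper bound, complete data graph): for `1 ≤ n < L - 1` and
`L ≤ 2^(n/16)`, any rewriting code storing `L` values in `n` cells of `q` levels
guarantees at most `O(n·q·log(n/log L) / log L)` rewrites (logs base 2). -/
theorem stmt13 : ∃ K : ℝ, 0 < K ∧ ∀ n q L : ℕ, 1 ≤ n → n < L - 1 →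
    (L : ℝ) ≤ (2 : ℝ) ^ ((n : ℝ) / 16) →
    ∀ dec upd t, Supports n q L dec upd t →
    (t : ℝ) ≤ K * (n : ℝ) * (q : ℝ) *
      Real.logb 2 ((n : ℝ) / Real.logb 2 L) / Real.logb 2 L := by
  refine ⟨32, by norm_num, fun n q L _ hnL hLn dec upd t hS => ?_⟩
  set b := logb 2 L
  set m := logb 2 (n / b)
  have hL : (2 : ℝ) ≤ L := by exact_mod_cast (by omega : 2 ≤ L)
  have hb : 1 ≤ b := (le_logb_iff_rpow_le one_lt_two (by linarith)).2 (by simpa using hL)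
  have hbn : 16 * b ≤ n := by
    have := logb_le_logb_of_le one_lt_two (by linarith) hLn
    rw [logb_rpow two_pos (by norm_num)] at this
    linarith
  have hm : 0 < m := logb_pos one_lt_two ((one_lt_div (by linarith)).2 (by linarith))
  set r := ⌊b / (32 * m)⌋₊
  have hr : b < 32 * m * (r + 1) := by
    have := Nat.lt_floor_add_one (b / (32 * m))
    rw [div_lt_iff₀ (by positivity)] at this
    linarith
  have hcard : (n + r).choose r < L := by
    rcases r.eq_zero_or_pos with hr0 | hr0
    · rw [hr0, Nat.choose_zero_right]; omega
    · have hr_le : r * (32 * m) ≤ b :=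
        (le_div_iff₀ (by positivity)).1 (Nat.floor_le (by positivity))
      have hlt := choose_add_lt_two_rpow hr0 (by linarith) hbn hr_le
        (by nlinarith [(Nat.one_le_cast (α := ℝ)).2 hr0])
      rw [rpow_logb two_pos (by norm_num) (by linarith)] at hlt
      exact_mod_cast hlt
  have ht : (t : ℝ) * (r + 1) ≤ n * q := by
    exact_mod_cast (hS.mul_succ_le hcard).trans (Nat.mul_le_mul_left n (Nat.sub_le q 1))
  rw [le_div_iff₀ (by linarith)]
  nlinarith
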